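/- Let π : X × Y → ℝ be a joint probability distribution on finite sets X, Y, with ψ = Σ_{i,a} √(π(x_i,y_a)) x_i ⊗ y_a and ρ_Y = tr_X(ψψ*). For suffixes y_c, y_d ∈ Y: π(x_i, y_c) = π(x_i, y_d) for all i if and only if ρ_Y(y_c) = ρ_Y(y_d). -/
import Mathlib


open scoped BigOperators

theorem stmt3 {X Y : Type*} [Fintype X] [Fintype Y] (π : X × Y → ℝ)
    (hnn : ∀ s, 0 ≤ π s) (hsum : ∑ s, π s = 1) (c d : Y) :
    let ψ : X × Y → ℂ := fun s => (Real.sqrt (π s) : ℂ)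
    let P : Matrix (X × Y) (X × Y) ℂ := Matrix.vecMulVec ψ (star ψ)
    let ρY : Matrix Y Y ℂ := Matrix.of fun a b => ∑ i : X, P (i, a) (i, b)
    (∀ i : X, π (i, c) = π (i, d)) ↔ (∀ a : Y, ρY a c = ρY a d) := by
  intro ψ P ρY
  have hρ : ∀ a b : Y, ρY a b = ((∑ i : X, Real.sqrt (π (i, a)) * Real.sqrt (π (i, b)) : ℝ) : ℂ) := by
    intro a b
    simp only [ρY, P, ψ, Matrix.of_apply, Matrix.vecMulVec_apply, Pi.star_apply,
      Complex.star_def, Complex.conj_ofReal, Complex.ofReal_sum, Complex.ofReal_mul]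
  constructor
  · intro h a
    rw [hρ, hρ]
    norm_cast
    exact Finset.sum_congr rfl fun i _ => by rw [h i]
  · intro h i
    have hc := h c
    have hd := h d
    rw [hρ, hρ] at hc hd
    have hc' : (∑ i : X, Real.sqrt (π (i, c)) * Real.sqrt (π (i, c)))
        = ∑ i : X, Real.sqrt (π (i, c)) * Real.sqrt (π (i, d)) := by exact_mod_cast hc
    have hd' : (∑ i : X, Real.sqrt (π (i, d)) * Real.sqrt (π (i, c)))
        = ∑ i : X, Real.sqrt (π (i, d)) * Real.sqrt (π (i, d)) := by exact_mod_cast hd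
    have hzero : ∑ i : X, (Real.sqrt (π (i, c)) - Real.sqrt (π (i, d)))^2 = 0 := by
      have : ∀ i : X, (Real.sqrt (π (i, c)) - Real.sqrt (π (i, d)))^2
          = Real.sqrt (π (i, c)) * Real.sqrt (π (i, c))
            - Real.sqrt (π (i, c)) * Real.sqrt (π (i, d))
            - Real.sqrt (π (i, d)) * Real.sqrt (π (i, c))
            + Real.sqrt (π (i, d)) * Real.sqrt (π (i, d)) := by intro i; ring
      rw [Finset.sum_congr rfl fun i _ => this i]
      simp only [Finset.sum_add_distrib, Finset.sum_sub_distrib, hc', hd']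
      ring
    have heach := (Finset.sum_eq_zero_iff_of_nonneg
      (fun i _ => sq_nonneg (Real.sqrt (π (i, c)) - Real.sqrt (π (i, d))))).mp hzero
      i (Finset.mem_univ i)
    have hsq : Real.sqrt (π (i, c)) = Real.sqrt (π (i, d)) := by
      have := pow_eq_zero_iff (n := 2) (by norm_num) |>.mp heach
      linarith
    exact (Real.sqrt_inj (hnn _) (hnn _)).mp hsq
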